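/- arXiv:2605.09144 — 2 statements merged into one kernel-verified Lean document; each statement's English description precedes it below -/
import Mathlib

section
/- Let H be a real Hilbert space, N a positive integer, and F₁,…,F_N : H → ℝ differentiable functions each having L-Lipschitz gradient (L > 0). Let F = (1/N)·∑_{i=1}^N Fᵢ. Fix θ ∈ H with ∇Fᵢ(θ) ≠ 0 for every i, and fix ρ > 0. On a probability space, let g₁,…,g_N be Bochner-integrable random vectors in H with gᵢ ≠ 0 almost surely. Define δᵢ = ∇Fᵢ(θ) − ∇F(θ), ζᵢ = gᵢ − ∇Fᵢ(θ), the local flatness proxies sᵢ = Fᵢ(θ + ρ·gᵢ/‖gᵢ‖) − Fᵢ(θ), their mean s̄ = (1/N)·∑_{j=1}^N sⱼ, and the flatness incompatibility Δ_FI = (1/N)·∑_{i=1}^N (sᵢ − s̄)². Assume Δ_FI and each ‖ζᵢ‖² are integrable. Then 𝔼[Δ_FI] ≤ (3ρ²/N)·∑_{i=1}^N 𝔼[‖δᵢ‖² + 4‖ζᵢ‖²] + (3/4)·L²·ρ⁴. -/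
open MeasureTheory Finset
open scoped RealInnerProductSpace

/-! Since the mean minimizes the sum of squared deviations, it suffices to compare every
proxy `sᵢ` with the single constant `c = ρ ‖∇F θ‖`. Writing `u = ρ gᵢ / ‖gᵢ‖`, the descent
lemma gives `|sᵢ - ⟪∇Fᵢ θ, u⟫| ≤ L ρ² / 2`; Cauchy–Schwarz gives
`|⟪∇Fᵢ θ, u⟫ - ρ ‖gᵢ‖| ≤ ρ ‖ζᵢ‖`; and `|ρ ‖gᵢ‖ - c| ≤ ρ (‖ζᵢ‖ + ‖δᵢ‖)`. Hence
`|sᵢ - c| ≤ ρ ‖δᵢ‖ + 2 ρ ‖ζᵢ‖ + L ρ² / 2`, and `(x + y + z)² ≤ 3 (x² + y² + z²)`, averaging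
over `i` and taking expectations give the bound. -/

section Gradient

variable {H : Type*} [NormedAddCommGroup H] [InnerProductSpace ℝ H]

theorem norm_div_norm_smul_le (ρ : ℝ) (g : H) : ‖(ρ / ‖g‖) • g‖ ≤ |ρ| := by
  rw [norm_smul, Real.norm_eq_abs, abs_div, abs_norm]
  rcases eq_or_ne ‖g‖ 0 with h0 | h0
  · simp [h0]
  · rw [div_mul_cancel₀ _ h0]

theorem abs_inner_div_norm_smul_sub_le (v g : H) (ρ : ℝ) :
    |⟪v, (ρ / ‖g‖) • g⟫ - ρ * ‖g‖| ≤ |ρ| * ‖g - v‖ := by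
  have hg : ⟪g, (ρ / ‖g‖) • g⟫ = ρ * ‖g‖ := by
    rw [real_inner_smul_right, real_inner_self_eq_norm_sq]
    rcases eq_or_ne ‖g‖ 0 with h0 | h0
    · simp [h0]
    · field_simp
  calc |⟪v, (ρ / ‖g‖) • g⟫ - ρ * ‖g‖| = |⟪v - g, (ρ / ‖g‖) • g⟫| := by
        rw [inner_sub_left, hg]
    _ ≤ ‖v - g‖ * ‖(ρ / ‖g‖) • g‖ := abs_real_inner_le_norm _ _
    _ ≤ ‖g - v‖ * |ρ| := by
        rw [norm_sub_rev]; gcongr; exact norm_div_norm_smul_le ρ g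
    _ = |ρ| * ‖g - v‖ := mul_comm _ _

variable [CompleteSpace H]

theorem hasDerivAt_apply_add_smul {f : H → ℝ} (hf : Differentiable ℝ f) (x h : H)
    (t : ℝ) : HasDerivAt (fun t : ℝ => f (x + t • h)) ⟪gradient f (x + t • h), h⟫ t := by
  have hline : HasDerivAt (fun t : ℝ => x + t • h) h t := by
    simpa using ((hasDerivAt_id t).smul_const h).const_add x
  simpa [InnerProductSpace.toDual_apply_apply, Function.comp_def] using
    (hf (x + t • h)).hasGradientAt.hasFDerivAt.comp_hasDerivAt t hline

/-- The descent lemma, proved by fencing `t ↦ f (x + t • h) - f x - t ⟪∇f x, h⟫`, whose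
derivative is at most `L ‖h‖² t` in absolute value, by `L / 2 ‖h‖² t²`. -/
theorem abs_sub_sub_inner_gradient_le {f : H → ℝ} {L : ℝ} (hf : Differentiable ℝ f)
    (hlip : ∀ x y, ‖gradient f x - gradient f y‖ ≤ L * ‖x - y‖) (x h : H) :
    |f (x + h) - f x - ⟪gradient f x, h⟫| ≤ L / 2 * ‖h‖ ^ 2 := by
  have hφ : ∀ t ∈ Set.Ico (0 : ℝ) 1, HasDerivWithinAt
      (fun t : ℝ => f (x + t • h) - f x - t * ⟪gradient f x, h⟫)
      ⟪gradient f (x + t • h) - gradient f x, h⟫ (Set.Ici t) t := fun t _ => by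
    rw [inner_sub_left]
    exact (((hasDerivAt_apply_add_smul hf x h t).sub_const _).sub
      (hasDerivAt_mul_const _)).hasDerivWithinAt |>.congr_deriv (by ring)
  have hB : ∀ t : ℝ, HasDerivAt (fun t => L / 2 * ‖h‖ ^ 2 * t ^ 2) (L * ‖h‖ ^ 2 * t) t :=
    fun t => ((hasDerivAt_pow 2 t).const_mul _).congr_deriv (by norm_num; ring)
  have hbound : ∀ t ∈ Set.Ico (0 : ℝ) 1,
      ‖⟪gradient f (x + t • h) - gradient f x, h⟫‖ ≤ L * ‖h‖ ^ 2 * t := fun t ht => by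
    calc ‖⟪gradient f (x + t • h) - gradient f x, h⟫‖
        ≤ ‖gradient f (x + t • h) - gradient f x‖ * ‖h‖ := norm_inner_le_norm _ _
      _ ≤ L * ‖x + t • h - x‖ * ‖h‖ := by gcongr; exact hlip _ _
      _ = L * ‖h‖ ^ 2 * t := by
        rw [add_sub_cancel_left, norm_smul, Real.norm_of_nonneg ht.1]; ring
  have hcont : ContinuousOn (fun t : ℝ => f (x + t • h) - f x - t * ⟪gradient f x, h⟫)
      (Set.Icc 0 1) := by
    have := hf.continuous
    fun_prop
  simpa using image_norm_le_of_norm_deriv_right_le_deriv_boundary hcont hφ (by simp) hB hbound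
    (Set.right_mem_Icc.2 zero_le_one)

theorem abs_sub_sub_mul_norm_le {f : H → ℝ} {L : ℝ} (hL : 0 ≤ L) (hf : Differentiable ℝ f)
    (hlip : ∀ x y, ‖gradient f x - gradient f y‖ ≤ L * ‖x - y‖) (θ w g : H) (ρ : ℝ) :
    |f (θ + (ρ / ‖g‖) • g) - f θ - ρ * ‖w‖| ≤
      |ρ| * ‖gradient f θ - w‖ + 2 * |ρ| * ‖g - gradient f θ‖ + L / 2 * ρ ^ 2 := by
  set v := gradient f θ
  set u := (ρ / ‖g‖) • g
  have hdescent : |f (θ + u) - f θ - ⟪v, u⟫| ≤ L / 2 * ρ ^ 2 := by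
    refine (abs_sub_sub_inner_gradient_le hf hlip θ u).trans ?_
    rw [← sq_abs ρ]
    gcongr
    exact norm_div_norm_smul_le ρ g
  have hinner : |⟪v, u⟫ - ρ * ‖g‖| ≤ |ρ| * ‖g - v‖ := abs_inner_div_norm_smul_sub_le v g ρ
  have hgv : |ρ * ‖g‖ - ρ * ‖v‖| ≤ |ρ| * ‖g - v‖ := by
    rw [← mul_sub, abs_mul]; gcongr; exact abs_norm_sub_norm_le g v
  have hvw : |ρ * ‖v‖ - ρ * ‖w‖| ≤ |ρ| * ‖v - w‖ := by
    rw [← mul_sub, abs_mul]; gcongr; exact abs_norm_sub_norm_le v w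
  rw [abs_le] at *
  constructor <;> linarith

theorem sq_sub_mul_norm_le {f : H → ℝ} {L : ℝ} (hL : 0 ≤ L) (hf : Differentiable ℝ f)
    (hlip : ∀ x y, ‖gradient f x - gradient f y‖ ≤ L * ‖x - y‖) (θ w g : H) (ρ : ℝ) :
    (f (θ + (ρ / ‖g‖) • g) - f θ - ρ * ‖w‖) ^ 2 ≤
      3 * ρ ^ 2 * (‖gradient f θ - w‖ ^ 2 + 4 * ‖g - gradient f θ‖ ^ 2)
        + 3 / 4 * L ^ 2 * ρ ^ 4 := by
  set a := |ρ| * ‖gradient f θ - w‖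
  set b := 2 * |ρ| * ‖g - gradient f θ‖
  set c := L / 2 * ρ ^ 2
  have hle := abs_sub_sub_mul_norm_le hL hf hlip θ w g ρ
  calc (f (θ + (ρ / ‖g‖) • g) - f θ - ρ * ‖w‖) ^ 2 ≤ (a + b + c) ^ 2 := by
        rw [← sq_abs]; gcongr
    _ ≤ 3 * a ^ 2 + 3 * b ^ 2 + 3 * c ^ 2 := by
        nlinarith [sq_nonneg (a - b), sq_nonneg (a - c), sq_nonneg (b - c)]
    _ = _ := by simp only [a, b, c, mul_pow, sq_abs]; ring

end Gradient

theorem sum_sq_sub_mean_le {ι : Type*} [Fintype ι] (a : ι → ℝ) (c : ℝ) :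
    ∑ i, (a i - (1 / (Fintype.card ι : ℝ)) * ∑ j, a j) ^ 2 ≤ ∑ i, (a i - c) ^ 2 := by
  rcases isEmpty_or_nonempty ι with _ | _
  · simp
  set m := (1 / (Fintype.card ι : ℝ)) * ∑ j, a j with hm
  have hsum : ∑ i, (a i - m) = 0 := by
    rw [sum_sub_distrib, sum_const, card_univ, nsmul_eq_mul, hm, ← mul_assoc,
      mul_one_div_cancel (by positivity), one_mul, sub_self]
  calc ∑ i, (a i - m) ^ 2
      ≤ ∑ i, (a i - m) ^ 2 + 2 * (m - c) * ∑ i, (a i - m) + Fintype.card ι * (m - c) ^ 2 := by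
        rw [hsum]; nlinarith [sq_nonneg (m - c)]
    _ = ∑ i, (a i - c) ^ 2 := by
        rw [mul_sum, ← nsmul_eq_mul, ← card_univ, ← sum_const, ← sum_add_distrib,
          ← sum_add_distrib]
        exact sum_congr rfl fun i _ => by ring

theorem flatness_incompatibility_expectation_general
    {H : Type*} [NormedAddCommGroup H] [InnerProductSpace ℝ H] [CompleteSpace H]
    {Ω : Type*} [MeasurableSpace Ω] (μ : Measure Ω) [IsProbabilityMeasure μ]
    {N : ℕ} (hN : 0 < N)
    (Fi : Fin N → H → ℝ) (L : ℝ) (hL : 0 < L)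
    (hdiff : ∀ i, Differentiable ℝ (Fi i))
    (hlip : ∀ i, ∀ x y : H, ‖gradient (Fi i) x - gradient (Fi i) y‖ ≤ L * ‖x - y‖)
    (F : H → ℝ)
    (θ : H)
    (ρ : ℝ)
    (g : Fin N → Ω → H)
    (δ : Fin N → H) (hδ : ∀ i, δ i = gradient (Fi i) θ - gradient F θ)
    (ζ : Fin N → Ω → H) (hζ : ∀ i ω, ζ i ω = g i ω - gradient (Fi i) θ)
    (s : Fin N → Ω → ℝ)
    (hs : ∀ i ω, s i ω = Fi i (θ + (ρ / ‖g i ω‖) • g i ω) - Fi i θ)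
    (sbar : Ω → ℝ) (hsbar : ∀ ω, sbar ω = (1 / (N : ℝ)) * ∑ j, s j ω)
    (ΔFI : Ω → ℝ) (hΔ : ∀ ω, ΔFI ω = (1 / (N : ℝ)) * ∑ i, (s i ω - sbar ω) ^ 2)
    (hΔ_int : Integrable ΔFI μ)
    (hζ_int : ∀ i, Integrable (fun ω => ‖ζ i ω‖ ^ 2) μ) :
    ∫ ω, ΔFI ω ∂μ ≤
      (3 * ρ ^ 2 / (N : ℝ)) * ∑ i, (∫ ω, (‖δ i‖ ^ 2 + 4 * ‖ζ i ω‖ ^ 2) ∂μ)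
        + (3 / 4) * L ^ 2 * ρ ^ 4 := by
  have hterm_int : ∀ i, Integrable (fun ω => ‖δ i‖ ^ 2 + 4 * ‖ζ i ω‖ ^ 2) μ :=
    fun i => (integrable_const _).add ((hζ_int i).const_mul 4)
  have hpoint : ∀ ω, ΔFI ω ≤
      3 * ρ ^ 2 / N * ∑ i, (‖δ i‖ ^ 2 + 4 * ‖ζ i ω‖ ^ 2) + 3 / 4 * L ^ 2 * ρ ^ 4 := fun ω => by
    have hmean := sum_sq_sub_mean_le (fun i => s i ω) (ρ * ‖gradient F θ‖)
    rw [Fintype.card_fin] at hmean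
    have hsq : ∀ i, (s i ω - ρ * ‖gradient F θ‖) ^ 2 ≤
        3 * ρ ^ 2 * (‖δ i‖ ^ 2 + 4 * ‖ζ i ω‖ ^ 2) + 3 / 4 * L ^ 2 * ρ ^ 4 := fun i => by
      rw [hs, hδ, hζ]
      exact sq_sub_mul_norm_le hL.le (hdiff i) (hlip i) θ (gradient F θ) (g i ω) ρ
    calc ΔFI ω ≤ 1 / N * ∑ i, (s i ω - ρ * ‖gradient F θ‖) ^ 2 := by
          rw [hΔ, hsbar]; exact mul_le_mul_of_nonneg_left hmean (by positivity)
      _ ≤ 1 / N * ∑ i, (3 * ρ ^ 2 * (‖δ i‖ ^ 2 + 4 * ‖ζ i ω‖ ^ 2) + 3 / 4 * L ^ 2 * ρ ^ 4) := by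
          gcongr with i; exact hsq i
      _ = _ := by
          rw [sum_add_distrib, ← mul_sum, sum_const, card_univ, Fintype.card_fin, nsmul_eq_mul]
          field_simp
  have hsum_int : Integrable (fun ω => 3 * ρ ^ 2 / N * ∑ i, (‖δ i‖ ^ 2 + 4 * ‖ζ i ω‖ ^ 2)) μ :=
    (integrable_finsetSum _ fun i _ => hterm_int i).const_mul _
  calc ∫ ω, ΔFI ω ∂μ
      ≤ ∫ ω, (3 * ρ ^ 2 / N * ∑ i, (‖δ i‖ ^ 2 + 4 * ‖ζ i ω‖ ^ 2) + 3 / 4 * L ^ 2 * ρ ^ 4) ∂μ :=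
        integral_mono hΔ_int (hsum_int.add (integrable_const _)) hpoint
    _ = _ := by
        rw [integral_add hsum_int (integrable_const _), integral_const_mul,
          integral_finsetSum _ fun i _ => hterm_int i]
        simp

/-- Lemma 1: expected flatness incompatibility bound. -/
theorem flatness_incompatibility_expectation
    {H : Type*} [NormedAddCommGroup H] [InnerProductSpace ℝ H] [CompleteSpace H]
    {Ω : Type*} [MeasurableSpace Ω] (μ : Measure Ω) [IsProbabilityMeasure μ]
    {N : ℕ} (hN : 0 < N)
    (Fi : Fin N → H → ℝ) (L : ℝ) (hL : 0 < L)
    (hdiff : ∀ i, Differentiable ℝ (Fi i))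
    (hlip : ∀ i, ∀ x y : H, ‖gradient (Fi i) x - gradient (Fi i) y‖ ≤ L * ‖x - y‖)
    (F : H → ℝ) (hF : F = fun x => (1 / (N : ℝ)) * ∑ i, Fi i x)
    (θ : H) (hθ : ∀ i, gradient (Fi i) θ ≠ 0)
    (ρ : ℝ) (hρ : 0 < ρ)
    (g : Fin N → Ω → H)
    (hg_int : ∀ i, Integrable (g i) μ)
    (hg_ne : ∀ i, ∀ᵐ ω ∂μ, g i ω ≠ 0)
    (δ : Fin N → H) (hδ : ∀ i, δ i = gradient (Fi i) θ - gradient F θ)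
    (ζ : Fin N → Ω → H) (hζ : ∀ i ω, ζ i ω = g i ω - gradient (Fi i) θ)
    (s : Fin N → Ω → ℝ)
    (hs : ∀ i ω, s i ω = Fi i (θ + (ρ / ‖g i ω‖) • g i ω) - Fi i θ)
    (sbar : Ω → ℝ) (hsbar : ∀ ω, sbar ω = (1 / (N : ℝ)) * ∑ j, s j ω)
    (ΔFI : Ω → ℝ) (hΔ : ∀ ω, ΔFI ω = (1 / (N : ℝ)) * ∑ i, (s i ω - sbar ω) ^ 2)
    (hΔ_int : Integrable ΔFI μ)
    (hζ_int : ∀ i, Integrable (fun ω => ‖ζ i ω‖ ^ 2) μ) :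
    ∫ ω, ΔFI ω ∂μ ≤
      (3 * ρ ^ 2 / (N : ℝ)) * ∑ i, (∫ ω, (‖δ i‖ ^ 2 + 4 * ‖ζ i ω‖ ^ 2) ∂μ)
        + (3 / 4) * L ^ 2 * ρ ^ 4 :=
  flatness_incompatibility_expectation_general μ hN Fi L hL hdiff hlip F θ ρ g δ hδ ζ hζ s hs sbar
    hsbar ΔFI hΔ hΔ_int hζ_int
end

section
/- Let H be a real Hilbert space and F : H → ℝ a differentiable function with L-Lipschitz gradient (L ≥ 0). Let η > 0, ρ ≥ 0, and let θ, θ̃, h ∈ H satisfy ‖θ̃ − θ‖ ≤ ρ. Then ‖h − ∇F(θ − η·h)‖² ≤ (4 + 8L²η²)·‖h − ∇F(θ̃)‖² + 8L²η²·‖∇F(θ̃)‖² + (4L² + 16L⁴η²)·ρ². -/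
/-!
Moving from `θt` to `θ - η • h` costs at most `‖θt - θ‖ + |η| ‖h‖` in position, hence at most
`L` times that in gradient, and `‖h‖ ≤ ‖h - ∇F θt‖ + ‖∇F θt‖`. This bounds the new tracking error
by a sum of four terms, and `(p + q + r + s)² ≤ 4 (p² + q² + r² + s²)` finishes.
-/

theorem add_add_add_sq_le (p q r s : ℝ) :
    (p + q + r + s) ^ 2 ≤ 4 * (p ^ 2 + q ^ 2 + r ^ 2 + s ^ 2) := by
  nlinarith [sq_nonneg (p - q), sq_nonneg (p - r), sq_nonneg (p - s), sq_nonneg (q - r),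
    sq_nonneg (q - s), sq_nonneg (r - s)]

theorem norm_sub_apply_sub_smul_le {E : Type*} [NormedAddCommGroup E] [NormedSpace ℝ E]
    {g : E → E} {L : ℝ} (hL : 0 ≤ L) (hg : ∀ x y, ‖g x - g y‖ ≤ L * ‖x - y‖)
    (η : ℝ) (θ θt h : E) :
    ‖h - g (θ - η • h)‖ ≤
      ‖h - g θt‖ + L * ‖θt - θ‖ + L * |η| * ‖h - g θt‖ + L * |η| * ‖g θt‖ := by
  have hstep : ‖θt - (θ - η • h)‖ ≤ ‖θt - θ‖ + |η| * (‖h - g θt‖ + ‖g θt‖) := calc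
    ‖θt - (θ - η • h)‖ = ‖(θt - θ) + η • h‖ := by rw [sub_sub_eq_add_sub, add_sub_right_comm]
    _ ≤ ‖θt - θ‖ + |η| * ‖h‖ := by rw [← Real.norm_eq_abs, ← norm_smul]; exact norm_add_le _ _
    _ ≤ ‖θt - θ‖ + |η| * (‖h - g θt‖ + ‖g θt‖) := by
        gcongr; rw [add_comm]; exact norm_le_norm_add_norm_sub' h (g θt)
  calc ‖h - g (θ - η • h)‖ ≤ ‖h - g θt‖ + ‖g θt - g (θ - η • h)‖ :=
        norm_sub_le_norm_sub_add_norm_sub _ _ _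
    _ ≤ ‖h - g θt‖ + L * (‖θt - θ‖ + |η| * (‖h - g θt‖ + ‖g θt‖)) := by
        gcongr; exact (hg _ _).trans (by gcongr)
    _ = ‖h - g θt‖ + L * ‖θt - θ‖ + L * |η| * ‖h - g θt‖ + L * |η| * ‖g θt‖ := by ring

theorem one_round_tracking_estimate_general
    {H : Type*} [NormedAddCommGroup H] [InnerProductSpace ℝ H] [CompleteSpace H]
    (F : H → ℝ) (L : ℝ) (hL : 0 ≤ L)
    (hlip : ∀ x y : H, ‖gradient F x - gradient F y‖ ≤ L * ‖x - y‖)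
    (η : ℝ) (ρ : ℝ)
    (θ θt h : H) (hclose : ‖θt - θ‖ ≤ ρ) :
    ‖h - gradient F (θ - η • h)‖ ^ 2 ≤
      (4 + 8 * L ^ 2 * η ^ 2) * ‖h - gradient F θt‖ ^ 2
        + 8 * L ^ 2 * η ^ 2 * ‖gradient F θt‖ ^ 2
        + (4 * L ^ 2 + 16 * L ^ 4 * η ^ 2) * ρ ^ 2 := by
  set a := ‖h - gradient F θt‖
  set G := ‖gradient F θt‖
  have hbound : ‖h - gradient F (θ - η • h)‖ ≤ a + L * ρ + L * |η| * a + L * |η| * G :=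
    (norm_sub_apply_sub_smul_le hL hlip η θ θt h).trans (by gcongr)
  calc ‖h - gradient F (θ - η • h)‖ ^ 2 ≤ (a + L * ρ + L * |η| * a + L * |η| * G) ^ 2 :=
        pow_le_pow_left₀ (norm_nonneg _) hbound 2
    _ ≤ 4 * (a ^ 2 + (L * ρ) ^ 2 + (L * |η| * a) ^ 2 + (L * |η| * G) ^ 2) :=
        add_add_add_sq_le _ _ _ _
    _ ≤ _ := by
        simp only [mul_pow, sq_abs]
        nlinarith [sq_nonneg (L * η * a), sq_nonneg (L * η * G), sq_nonneg (L ^ 2 * η * ρ)]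

/-- One-round tracking estimate for the adjusted direction after a global update. -/
theorem one_round_tracking_estimate
    {H : Type*} [NormedAddCommGroup H] [InnerProductSpace ℝ H] [CompleteSpace H]
    (F : H → ℝ) (L : ℝ) (hL : 0 ≤ L)
    (hdiff : Differentiable ℝ F)
    (hlip : ∀ x y : H, ‖gradient F x - gradient F y‖ ≤ L * ‖x - y‖)
    (η : ℝ) (hη : 0 < η) (ρ : ℝ) (hρ : 0 ≤ ρ)
    (θ θt h : H) (hclose : ‖θt - θ‖ ≤ ρ) :
    ‖h - gradient F (θ - η • h)‖ ^ 2 ≤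
      (4 + 8 * L ^ 2 * η ^ 2) * ‖h - gradient F θt‖ ^ 2
        + 8 * L ^ 2 * η ^ 2 * ‖gradient F θt‖ ^ 2
        + (4 * L ^ 2 + 16 * L ^ 4 * η ^ 2) * ρ ^ 2 :=
  one_round_tracking_estimate_general F L hL hlip η ρ θ θt h hclose
end
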